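/- arXiv:1409.3804 — 2 statements merged into one kernel-verified Lean document; each statement's English description precedes it below -/
import Mathlib

section
/- The full subcategory of endofunctors on Set preserving finite intersections is reflective: for every endofunctor H on Set there is a natural transformation r : H → H̄ into an intersection-preserving functor H̄ such that every natural transformation s : H → K into an intersection-preserving K factors uniquely through r. -/
/-- A functor on the category of sets. -/
structure SetFunctor where
  obj : Type → Type
  map : ∀ {X Y : Type}, (X → Y) → obj X → obj Y
  map_id : ∀ (X : Type), map (id : X → X) = id
  map_comp : ∀ {X Y Z : Type} (f : X → Y) (g : Y → Z), map (g ∘ f) = map g ∘ map f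

/-- A monad on the category of sets. -/
structure SetMonad extends SetFunctor where
  unit : ∀ (X : Type), X → obj X
  mult : ∀ (X : Type), obj (obj X) → obj X
  unit_natural : ∀ {X Y : Type} (f : X → Y) (x : X), map f (unit X x) = unit Y (f x)
  mult_natural : ∀ {X Y : Type} (f : X → Y) (p : obj (obj X)),
      map f (mult X p) = mult Y (map (map f) p)
  left_unit : ∀ (X : Type) (p : obj X), mult X (unit (obj X) p) = p
  right_unit : ∀ (X : Type) (p : obj X), mult X (map (unit X) p) = p
  assoc : ∀ (X : Type) (p : obj (obj (obj X))),
      mult X (mult (obj X) p) = mult X (map (mult X) p)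

/-- `F` preserves finite intersections: the pullback of any pair of injections is
sent to a pullback. -/
def PreservesFiniteIntersections (F : SetFunctor) : Prop :=
  ∀ (X A B : Type) (f : A → X) (g : B → X),
    Function.Injective f → Function.Injective g →
    ∀ (u : F.obj A) (v : F.obj B), F.map f u = F.map g v →
      ∃! w : F.obj {p : A × B // f p.1 = g p.2},
        F.map (fun p : {p : A × B // f p.1 = g p.2} => p.1.1) w = u ∧
        F.map (fun p : {p : A × B // f p.1 = g p.2} => p.1.2) w = v

/-! Every set functor preserves nonempty finite intersections (Trnková): if `H f u = H g v` with
`f` injective, then `H α u` only depends on `α` over `f⁻¹(range g)`. What can fail is the value at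
`∅`, and `H̄` replaces it by the equalizer of `H 1 ⇉ H 2`. An intersection-preserving `K` has exactly
this value at `∅`, since the two points of `2` have empty intersection; hence a transformation
`H → K` extends uniquely along `r`: on nonempty sets `H̄ = H`, and at `∅` the extension is forced
through the equalizers. -/

open Function Set

namespace SetFunctor

variable (H : SetFunctor)

theorem map_map {X Y Z : Type} (f : X → Y) (g : Y → Z) (x : H.obj X) :
    H.map g (H.map f x) = H.map (g ∘ f) x := by
  rw [H.map_comp]; rfl

theorem map_id_apply {X : Type} (x : H.obj X) : H.map id x = x := by
  rw [H.map_id]; rfl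

theorem map_injective {A X : Type} [Nonempty A] {f : A → X} (hf : Injective f) :
    Injective (H.map f) := by
  obtain ⟨g, hg⟩ := hf.hasLeftInverse
  refine LeftInverse.injective (g := H.map g) fun u => ?_
  rw [map_map, hg.comp_eq_id, map_id_apply]

/-- Extend `α` and `β` along `f` by the same map: the two extensions agree on the range of `g`,
which is where `H.map f u = H.map g v` lives. -/
theorem map_eq_map_of_eqOn {A B X Y : Type} {f : A → X} {g : B → X} (hf : Injective f)
    {u : H.obj A} {v : H.obj B} (huv : H.map f u = H.map g v) {α β : A → Y}
    (hαβ : EqOn α β (f ⁻¹' range g)) : H.map α u = H.map β u := by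
  classical
  rcases isEmpty_or_nonempty A with _ | ⟨⟨a₀⟩⟩
  · rw [Subsingleton.elim α β]
  have hg : extend f α (fun _ => α a₀) ∘ g = extend f β (fun _ => α a₀) ∘ g := by
    funext b
    by_cases hb : ∃ a, f a = g b
    · obtain ⟨a, ha⟩ := hb
      simp only [comp_apply, ← ha, hf.extend_apply]
      exact hαβ ⟨b, ha.symm⟩
    · simp only [comp_apply, extend_apply' _ _ _ hb]
  calc H.map α u = H.map (extend f α fun _ => α a₀) (H.map f u) := by
        rw [map_map, extend_comp hf]
    _ = H.map (extend f β fun _ => α a₀) (H.map f u) := by rw [huv, map_map, map_map, hg]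
    _ = H.map β u := by rw [map_map, extend_comp hf]

theorem exists_map_fst_eq_of_nonempty {A B X : Type} {f : A → X} {g : B → X} (hf : Injective f)
    (p₀ : f.Pullback g) {u : H.obj A} {v : H.obj B} (huv : H.map f u = H.map g v) :
    ∃ w : H.obj (f.Pullback g), H.map Pullback.fst w = u := by
  classical
  let σ : A → f.Pullback g := fun a =>
    if h : ∃ b, g b = f a then ⟨(a, h.choose), h.choose_spec.symm⟩ else p₀
  refine ⟨H.map σ u, ?_⟩
  rw [map_map]
  refine (H.map_eq_map_of_eqOn hf huv (β := id) fun a ha => ?_).trans (H.map_id_apply u)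
  have ha : ∃ b, g b = f a := ha
  simp only [σ, comp_apply, dif_pos ha, Pullback.fst, id]

/-- The value `H̄ ∅` of the Trnková closure. -/
def Equalizer : Type :=
  {u : H.obj Unit // H.map (fun _ => true) u = H.map (fun _ => false) u}

variable {H}

theorem Equalizer.map_eq (e : H.Equalizer) {Z : Type} (g g' : Unit → Z) :
    H.map g e.1 = H.map g' e.1 := by
  let c : Bool → Z := fun b => cond b (g ()) (g' ())
  calc H.map g e.1 = H.map c (H.map (fun _ => true) e.1) := by rw [map_map]; rfl
    _ = H.map c (H.map (fun _ => false) e.1) := by rw [e.2]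
    _ = H.map g' e.1 := by rw [map_map]; rfl

theorem Equalizer.map_const_injective {A : Type} (a : A) :
    Injective fun e : H.Equalizer => H.map (fun _ => a) e.1 :=
  fun _ _ h => Subtype.ext (H.map_injective (injective_of_subsingleton _) h)

variable (H)

theorem exists_equalizer_of_disjoint {A B X : Type} {f : A → X} {g : B → X} (hf : Injective f)
    (hfg : ∀ a b, f a ≠ g b) {u : H.obj A} {v : H.obj B} (huv : H.map f u = H.map g v) (a : A) :
    ∃ e : H.Equalizer, H.map (fun _ => a) e.1 = u := by
  have hconst : ∀ {Y : Type} (α β : A → Y), H.map α u = H.map β u := fun α β =>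
    H.map_eq_map_of_eqOn hf huv fun a' ⟨b, hb⟩ => (hfg a' b hb.symm).elim
  refine ⟨⟨H.map (fun _ => ()) u, ?_⟩, ?_⟩
  · rw [map_map, map_map]
    exact hconst _ _
  · rw [map_map]
    exact (hconst _ id).trans (H.map_id_apply u)

theorem map_const_eq_of_map_eq_map_const {A X : Type} {f : A → X} (hf : Injective f)
    {u : H.obj A} (e : H.Equalizer) (x : X) (h : H.map f u = H.map (fun _ => x) e.1) (a : A) :
    H.map (fun _ => a) e.1 = u := by
  have : Nonempty A := ⟨a⟩
  apply H.map_injective hf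
  rw [map_map, h]
  exact e.map_eq _ _

def toEqualizer {X : Type} (hX : IsEmpty X) (x : H.obj X) : H.Equalizer :=
  ⟨H.map (fun _ => ()) x, by
    have := hX
    rw [map_map, map_map, Subsingleton.elim ((fun _ => true) ∘ _) ((fun _ => false) ∘ _)]⟩

theorem toEqualizer_map {X Y : Type} (hX : IsEmpty X) (hY : IsEmpty Y) (f : X → Y)
    (x : H.obj X) : H.toEqualizer hY (H.map f x) = H.toEqualizer hX x :=
  Subtype.ext (H.map_map f _ x)

theorem map_eq_map_toEqualizer {X Y : Type} (hX : IsEmpty X) (f : X → Y) (y : Y)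
    (x : H.obj X) : H.map f x = H.map (fun _ => y) (H.toEqualizer hX x).1 := by
  rw [toEqualizer, map_map, Subsingleton.elim f]

/-- An element of `H̄ X`: an element of `H X` if `X` is nonempty, of `H̄ ∅` if it is empty. -/
def ClosureObj (X : Type) : Type :=
  (Nonempty X → H.obj X) × (IsEmpty X → H.Equalizer)

namespace ClosureObj

variable {H} {X Y Z : Type}

theorem ext_of_nonempty (hX : Nonempty X) {p q : H.ClosureObj X} (h : p.1 hX = q.1 hX) :
    p = q :=
  Prod.ext (funext fun _ => h) (funext fun h' => (not_isEmpty_iff.mpr hX h').elim)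

theorem ext_of_isEmpty (hX : IsEmpty X) {p q : H.ClosureObj X} (h : p.2 hX = q.2 hX) :
    p = q :=
  Prod.ext (funext fun h' => (not_isEmpty_iff.mpr h' hX).elim) (funext fun _ => h)

def ofEqualizer (hX : IsEmpty X) (e : H.Equalizer) : H.ClosureObj X :=
  (fun h => (not_isEmpty_iff.mpr h hX).elim, fun _ => e)

open Classical in
noncomputable def map (g : X → Y) (p : H.ClosureObj X) : H.ClosureObj Y :=
  (fun hY => if hX : Nonempty X then H.map g (p.1 hX)
      else H.map (fun _ => hY.some) (p.2 (not_nonempty_iff.mp hX)).1,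
    fun hY => p.2 (@Function.isEmpty _ _ hY g))

theorem map_fst (g : X → Y) (p : H.ClosureObj X) (hX : Nonempty X) (hY : Nonempty Y) :
    (p.map g).1 hY = H.map g (p.1 hX) :=
  dif_pos hX

theorem map_fst_of_isEmpty (g : X → Y) (p : H.ClosureObj X) (hX : IsEmpty X) (y : Y) :
    (p.map g).1 ⟨y⟩ = H.map (fun _ => y) (p.2 hX).1 :=
  (dif_neg (not_nonempty_iff.mpr hX)).trans ((p.2 hX).map_eq _ _)

theorem map_snd (g : X → Y) (p : H.ClosureObj X) (hX : IsEmpty X) (hY : IsEmpty Y) :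
    (p.map g).2 hY = p.2 hX :=
  rfl

theorem map_id (p : H.ClosureObj X) : p.map id = p := by
  cases isEmpty_or_nonempty X with
  | inl hX => exact ext_of_isEmpty hX (map_snd _ _ hX hX)
  | inr hX => exact ext_of_nonempty hX ((map_fst _ _ hX hX).trans (H.map_id_apply _))

theorem map_map (f : X → Y) (g : Y → Z) (p : H.ClosureObj X) :
    (p.map f).map g = p.map (g ∘ f) := by
  cases isEmpty_or_nonempty Z with
  | inl hZ => exact ext_of_isEmpty hZ rfl
  | inr hZ =>
    obtain ⟨z⟩ := hZ
    refine ext_of_nonempty ⟨z⟩ ?_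
    cases isEmpty_or_nonempty X with
    | inr hX =>
      have hY : Nonempty Y := hX.map f
      rw [map_fst _ _ hY, map_fst _ _ hX hY, map_fst _ _ hX, H.map_map]
    | inl hX =>
      rw [map_fst_of_isEmpty _ _ hX z]
      cases isEmpty_or_nonempty Y with
      | inl hY => rw [map_fst_of_isEmpty _ _ hY z, map_snd _ _ hX hY]
      | inr hY => rw [map_fst _ _ hY, map_fst_of_isEmpty _ _ hX hY.some, H.map_map, (p.2 hX).map_eq]

end ClosureObj

noncomputable def trnkovaClosure : SetFunctor where
  obj := H.ClosureObj
  map := ClosureObj.map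
  map_id _ := funext ClosureObj.map_id
  map_comp f g := funext fun p => (ClosureObj.map_map f g p).symm

theorem preservesFiniteIntersections_of_map_injective (F : SetFunctor)
    (hinj : ∀ {A X : Type} {f : A → X}, Injective f → Injective (F.map f))
    (hfst : ∀ {A B X : Type} {f : A → X} (g : B → X), Injective f →
      ∀ {u : F.obj A} {v : F.obj B}, F.map f u = F.map g v →
        ∃ w : F.obj (f.Pullback g), F.map Pullback.fst w = u) :
    PreservesFiniteIntersections F := by
  intro X A B f g hf hg u v huv
  obtain ⟨w, hw⟩ := hfst g hf huv
  have hfst_inj : Injective (Pullback.fst : f.Pullback g → A) := fun p q hpq =>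
    Subtype.ext (Prod.ext hpq (hg (by rw [← p.2, ← q.2]; exact congrArg f hpq)))
  refine ⟨w, ⟨hw, hinj hg ?_⟩, fun w' hw' => hinj hfst_inj (hw'.1.trans hw.symm)⟩
  rw [F.map_map, ← huv, ← hw, F.map_map]
  exact congrArg (F.map · w) (funext fun p => p.2.symm)

def toClosure (X : Type) (x : H.obj X) : H.ClosureObj X :=
  (fun _ => x, fun hX => H.toEqualizer hX x)

namespace ClosureObj

variable {H} {X Y : Type}

theorem eq_toClosure (hX : Nonempty X) (p : H.ClosureObj X) : p = H.toClosure X (p.1 hX) :=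
  ext_of_nonempty hX rfl

theorem map_toClosure (f : X → Y) (x : H.obj X) :
    (H.toClosure X x).map f = H.toClosure Y (H.map f x) := by
  cases isEmpty_or_nonempty Y with
  | inl hY =>
    have hX : IsEmpty X := f.isEmpty
    exact ext_of_isEmpty hY (H.toEqualizer_map hX hY f x).symm
  | inr hY =>
    obtain ⟨y⟩ := hY
    refine ext_of_nonempty ⟨y⟩ ?_
    cases isEmpty_or_nonempty X with
    | inl hX => exact (map_fst_of_isEmpty f _ hX y).trans (H.map_eq_map_toEqualizer hX f y x).symm
    | inr hX => exact map_fst f _ hX _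

theorem map_toUnit (hX : IsEmpty X) (p : H.ClosureObj X) :
    p.map (fun _ => ()) = H.toClosure Unit (p.2 hX).1 :=
  ext_of_nonempty ⟨()⟩ ((p.map_fst_of_isEmpty _ hX ()).trans (H.map_id_apply _))

theorem map_injective {f : X → Y} (hf : Injective f) : Injective (map (H := H) f) := by
  intro p q h
  cases isEmpty_or_nonempty X with
  | inr hX =>
    have hY : Nonempty Y := hX.map f
    have h₁ := congrArg (fun p => p.1 hY) h
    simp only [map_fst f _ hX] at h₁
    exact ext_of_nonempty hX (H.map_injective hf h₁)
  | inl hX =>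
    refine ext_of_isEmpty hX ?_
    cases isEmpty_or_nonempty Y with
    | inl hY => exact congrArg (fun p => p.2 hY) h
    | inr hY =>
      obtain ⟨y⟩ := hY
      have h₁ := congrArg (fun p => p.1 ⟨y⟩) h
      simp only [map_fst_of_isEmpty f _ hX y] at h₁
      exact Equalizer.map_const_injective y h₁

theorem exists_map_fst_eq {A B X : Type} {f : A → X} (g : B → X) (hf : Injective f)
    {u : H.ClosureObj A} {v : H.ClosureObj B} (huv : u.map f = v.map g) :
    ∃ w : H.ClosureObj (f.Pullback g), w.map Pullback.fst = u := by
  rcases isEmpty_or_nonempty A with hA | ⟨⟨a⟩⟩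
  · exact ⟨ofEqualizer Pullback.fst.isEmpty (u.2 hA), ext_of_isEmpty hA rfl⟩
  have key := congrArg (fun p => p.1 ⟨f a⟩) huv
  simp only [map_fst f u ⟨a⟩] at key
  cases isEmpty_or_nonempty (f.Pullback g) with
  | inr hP =>
    obtain ⟨p₀⟩ := hP
    rw [map_fst g v ⟨p₀.1.2⟩] at key
    obtain ⟨w, hw⟩ := H.exists_map_fst_eq_of_nonempty hf p₀ key
    exact ⟨H.toClosure _ w, by rw [map_toClosure, hw, ← eq_toClosure]⟩
  | inl hP =>
    suffices ∃ e : H.Equalizer, H.map (fun _ => a) e.1 = u.1 ⟨a⟩ by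
      obtain ⟨e, he⟩ := this
      exact ⟨ofEqualizer hP e, ext_of_nonempty ⟨a⟩ ((map_fst_of_isEmpty _ _ hP a).trans he)⟩
    cases isEmpty_or_nonempty B with
    | inr hB =>
      rw [map_fst g v hB] at key
      exact H.exists_equalizer_of_disjoint hf (fun a b h => hP.false ⟨(a, b), h⟩) key a
    | inl hB =>
      rw [map_fst_of_isEmpty g v hB (f a)] at key
      exact ⟨v.2 hB, H.map_const_eq_of_map_eq_map_const hf _ _ key a⟩

end ClosureObj

theorem trnkovaClosure_preservesFiniteIntersections :
    PreservesFiniteIntersections H.trnkovaClosure :=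
  preservesFiniteIntersections_of_map_injective _ ClosureObj.map_injective
    ClosureObj.exists_map_fst_eq

abbrev NatTrans (H K : SetFunctor) : Type 1 :=
  {s : ∀ X : Type, H.obj X → K.obj X //
    ∀ (X Y : Type) (f : X → Y) (x : H.obj X), s Y (H.map f x) = K.map f (s X x)}

variable {H} {K : SetFunctor}

def NatTrans.mapEqualizer (s : H.NatTrans K) (e : H.Equalizer) : K.Equalizer :=
  ⟨s.1 Unit e.1, by rw [← s.2, ← s.2, e.2]⟩

theorem NatTrans.toEqualizer_app (s : H.NatTrans K) {X : Type} (hX : IsEmpty X) (x : H.obj X) :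
    K.toEqualizer hX (s.1 X x) = s.mapEqualizer (H.toEqualizer hX x) :=
  Subtype.ext (s.2 X Unit _ x).symm

/-- `K` preserves the empty intersection of the two points of `2`, so `K ∅` is the equalizer. -/
theorem toEqualizer_bijective (hK : PreservesFiniteIntersections K) {X : Type}
    (hX : IsEmpty X) : Bijective (K.toEqualizer hX) := by
  let P := (fun _ : Unit => true).Pullback fun _ : Unit => false
  have : IsEmpty P := ⟨fun p => Bool.noConfusion p.2⟩
  have := hX
  let j : X → P := isEmptyElim
  let j' : P → X := isEmptyElim
  have hj : ∀ c, K.map j' (K.map j c) = c := fun c => by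
    rw [map_map, Subsingleton.elim (j' ∘ j) id, map_id_apply]
  have hproj : ∀ c (π : P → Unit), K.map π (K.map j c) = (K.toEqualizer hX c).1 := fun c π => by
    rw [toEqualizer, map_map, Subsingleton.elim (π ∘ j)]
  have hpb (e : K.Equalizer) := hK Bool Unit Unit _ _
    (injective_of_subsingleton _) (injective_of_subsingleton _) e.1 e.1 e.2
  refine ⟨fun c c' h => ?_, fun e => ?_⟩
  · obtain ⟨_, -, huniq⟩ := hpb (K.toEqualizer hX c)
    have hproj' (π : P → Unit) : K.map π (K.map j c') = (K.toEqualizer hX c).1 :=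
      (hproj c' π).trans (congrArg Subtype.val h).symm
    rw [← hj c, ← hj c', huniq (K.map j c) ⟨hproj c _, hproj c _⟩,
      huniq (K.map j c') ⟨hproj' _, hproj' _⟩]
  · obtain ⟨w, ⟨hw, -⟩, -⟩ := hpb e
    refine ⟨K.map j' w, Subtype.ext ?_⟩
    change K.map (fun _ => ()) (K.map j' w) = e.1
    rw [map_map, ← hw, Subsingleton.elim ((fun _ => ()) ∘ j')]

variable (hK : PreservesFiniteIntersections K) (s : H.NatTrans K)

open Classical in
noncomputable def closureLift (X : Type) (p : H.ClosureObj X) : K.obj X :=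
  if hX : Nonempty X then s.1 X (p.1 hX)
  else (Equiv.ofBijective _ (toEqualizer_bijective hK (not_nonempty_iff.mp hX))).symm
    (s.mapEqualizer (p.2 (not_nonempty_iff.mp hX)))

theorem closureLift_of_nonempty {X : Type} (hX : Nonempty X) (p : H.ClosureObj X) :
    closureLift hK s X p = s.1 X (p.1 hX) :=
  dif_pos hX

theorem toEqualizer_closureLift {X : Type} (hX : IsEmpty X) (p : H.ClosureObj X) :
    K.toEqualizer hX (closureLift hK s X p) = s.mapEqualizer (p.2 hX) := by
  rw [closureLift, dif_neg (not_nonempty_iff.mpr hX)]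
  exact Equiv.ofBijective_apply_symm_apply _ _ _

theorem closureLift_map {X Y : Type} (f : X → Y) (p : H.ClosureObj X) :
    closureLift hK s Y (p.map f) = K.map f (closureLift hK s X p) := by
  cases isEmpty_or_nonempty Y with
  | inl hY =>
    have hX : IsEmpty X := f.isEmpty
    apply (toEqualizer_bijective hK hY).1
    rw [toEqualizer_closureLift, K.toEqualizer_map hX hY, toEqualizer_closureLift]
    rfl
  | inr hY =>
    obtain ⟨y⟩ := hY
    rw [closureLift_of_nonempty hK s ⟨y⟩]
    cases isEmpty_or_nonempty X with
    | inr hX => rw [p.map_fst f hX, closureLift_of_nonempty hK s hX, s.2]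
    | inl hX =>
      rw [p.map_fst_of_isEmpty f hX y, s.2, K.map_eq_map_toEqualizer hX f y,
        toEqualizer_closureLift]
      rfl

theorem closureLift_toClosure {X : Type} (x : H.obj X) :
    closureLift hK s X (H.toClosure X x) = s.1 X x := by
  cases isEmpty_or_nonempty X with
  | inr hX => exact closureLift_of_nonempty hK s hX _
  | inl hX =>
    apply (toEqualizer_bijective hK hX).1
    rw [toEqualizer_closureLift, s.toEqualizer_app]
    rfl

theorem eq_closureLift (t : H.trnkovaClosure.NatTrans K)
    (ht : ∀ (X : Type) (x : H.obj X), t.1 X (H.toClosure X x) = s.1 X x) :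
    t.1 = closureLift hK s := by
  funext X p
  cases isEmpty_or_nonempty X with
  | inr hX => rw [p.eq_toClosure hX, ht, closureLift_of_nonempty hK s hX]; rfl
  | inl hX =>
    refine (toEqualizer_bijective hK hX).1 ((t.toEqualizer_app hX p).trans
      (.trans ?_ (toEqualizer_closureLift hK s hX p).symm))
    exact Subtype.ext ((congrArg (t.1 Unit) (p.map_toUnit hX)).trans (ht Unit _))

end SetFunctor

/-- The intersection-preserving set functors form a reflective subcategory: every
set functor `H` has a natural transformation `r : H → H'` into an
intersection-preserving `H'` through which every natural transformation into an
intersection-preserving functor factors uniquely. -/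
theorem trnkova_closure_reflective (H : SetFunctor) :
    ∃ (H' : SetFunctor) (_ : PreservesFiniteIntersections H')
      (r : ∀ X : Type, H.obj X → H'.obj X),
      (∀ (X Y : Type) (f : X → Y) (x : H.obj X), r Y (H.map f x) = H'.map f (r X x)) ∧
      ∀ (K : SetFunctor), PreservesFiniteIntersections K →
        ∀ s : {s : ∀ X : Type, H.obj X → K.obj X //
            ∀ (X Y : Type) (f : X → Y) (x : H.obj X), s Y (H.map f x) = K.map f (s X x)},
          ∃! t : {t : ∀ X : Type, H'.obj X → K.obj X //
              ∀ (X Y : Type) (f : X → Y) (x : H'.obj X), t Y (H'.map f x) = K.map f (t X x)},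
            ∀ (X : Type) (x : H.obj X), t.1 X (r X x) = s.1 X x := by
  refine ⟨H.trnkovaClosure, H.trnkovaClosure_preservesFiniteIntersections, H.toClosure,
    fun X Y f x => (SetFunctor.ClosureObj.map_toClosure f x).symm, fun K hK s => ?_⟩
  exact ⟨⟨SetFunctor.closureLift hK s, fun X Y f p => SetFunctor.closureLift_map hK s f p⟩,
    fun X x => SetFunctor.closureLift_toClosure hK s x,
    fun t ht => Subtype.ext (SetFunctor.eq_closureLift hK s t ht)⟩
end

section
/- Every monad S on Set satisfies: either the canonical natural transformation r : S → S̄ into the Trnková closure is an isomorphism, or S∅ = ∅ and S is isomorphic to the submonad (S̄)⁰ of S̄ obtained by redefining the value at ∅ to be ∅. In particular, if S∅ ≠ ∅ then r_∅ : S∅ → S̄∅ is bijective. -/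
/-!
If `S∅` has an element `s₀`, then `S∅` is a retract of `S1`: substituting `s₀` for the variable
retracts `S1` onto the image of `S∅`, and that image consists exactly of the elements of `S1`
that are identified by the two maps `S1 → S2`. Since `r` is bijective on `1` and `2` and `T`
preserves intersections (so `T∅ → T1` is injective), the same description holds in `T`, and
`r_∅` is bijective. Every empty set is isomorphic to `∅`, so `r` is bijective everywhere.
-/

namespace SetFunctor

variable (F : SetFunctor)

theorem map_map_s11 {X Y Z : Type} (u : X → Y) (v : Y → Z) (p : F.obj X) :
    F.map v (F.map u p) = F.map (v ∘ u) p := by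
  rw [F.map_comp]; rfl

def mapEquiv {X Y : Type} (e : X ≃ Y) : F.obj X ≃ F.obj Y where
  toFun := F.map e
  invFun := F.map e.symm
  left_inv p := by simp [map_map_s11, F.map_id]
  right_inv p := by simp [map_map_s11, F.map_id]

end SetFunctor

/-- An injection `f` has the diagonal as its kernel pair, so the two projections agree. -/
theorem PreservesFiniteIntersections.map_injective {F : SetFunctor}
    (hF : PreservesFiniteIntersections F) {A X : Type} {f : A → X}
    (hf : Function.Injective f) : Function.Injective (F.map f) := by
  intro u v huv
  obtain ⟨w, ⟨rfl, rfl⟩, -⟩ := hF X A A f f hf hf u v huv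
  congr 1
  exact funext fun p => hf p.2

namespace SetMonad

variable (S : SetMonad)

def substConst {Y : Type} (s₀ : S.obj Empty) (s : S.obj Y) : S.obj Empty :=
  S.mult Empty (S.map (fun _ => s₀) s)

theorem substConst_map_elim {Y : Type} (s₀ : S.obj Empty) (a : S.obj Empty) :
    S.substConst s₀ (S.map (Empty.elim : Empty → Y) a) = a := by
  have hunit : (fun _ : Y => s₀) ∘ Empty.elim = S.unit Empty := funext fun e => e.elim
  rw [substConst, S.map_map_s11, hunit, S.right_unit]

/-- Substituting along `k = [η (), S.map elim s₀] : Bool → S1` sends `S.map (fun _ => true) s₁`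
to `s₁` and `S.map (fun _ => false) s₁` to `S.map elim (substConst s₀ s₁)`. -/
theorem map_elim_substConst {s₁ : S.obj Unit} (s₀ : S.obj Empty)
    (hs₁ : S.map (fun _ => true) s₁ = S.map (fun _ => false) s₁) :
    S.map Empty.elim (S.substConst s₀ s₁) = s₁ := by
  let k : Bool → S.obj Unit := fun b => bif b then S.unit Unit () else S.map Empty.elim s₀
  have htrue : S.mult Unit (S.map k (S.map (fun _ => true) s₁)) = s₁ := by
    rw [S.map_map_s11]
    exact S.right_unit Unit s₁
  have hfalse : S.mult Unit (S.map k (S.map (fun _ => false) s₁)) =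
      S.map Empty.elim (S.substConst s₀ s₁) := by
    rw [substConst, S.mult_natural, S.map_map_s11, S.map_map_s11]
    rfl
  rw [← hfalse, ← hs₁, htrue]

end SetMonad

theorem bijective_app_of_equiv {F G : SetFunctor} {r : ∀ X : Type, F.obj X → G.obj X}
    (hnat : ∀ (X Y : Type) (f : X → Y) (x : F.obj X), r Y (F.map f x) = G.map f (r X x))
    {X Y : Type} (e : X ≃ Y) (hY : Function.Bijective (r Y)) : Function.Bijective (r X) := by
  have hr : r X = (G.mapEquiv e).symm ∘ r Y ∘ F.mapEquiv e := by
    funext p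
    simp [SetFunctor.mapEquiv, hnat, SetFunctor.map_map_s11, G.map_id]
  rw [hr]
  exact (G.mapEquiv e).symm.bijective.comp (hY.comp (F.mapEquiv e).bijective)

theorem bijective_app_empty {S : SetMonad} {T : SetFunctor} {r : ∀ X : Type, S.obj X → T.obj X}
    (hnat : ∀ (X Y : Type) (f : X → Y) (x : S.obj X), r Y (S.map f x) = T.map f (r X x))
    (hpres : PreservesFiniteIntersections T) (hUnit : Function.Bijective (r Unit))
    (hBool : Function.Injective (r Bool)) (s₀ : S.obj Empty) :
    Function.Bijective (r Empty) := by
  have hr : r Unit ∘ S.map Empty.elim = T.map Empty.elim ∘ r Empty := funext (hnat _ _ _)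
  have hS : Function.Injective (S.map (Empty.elim : Empty → Unit)) :=
    Function.LeftInverse.injective (S.substConst_map_elim s₀)
  have hT : Function.Injective (T.map (Empty.elim : Empty → Unit)) :=
    hpres.map_injective fun e => e.elim
  refine ⟨Function.Injective.of_comp (hr ▸ hUnit.1.comp hS), fun t => ?_⟩
  obtain ⟨s₁, hs₁⟩ := hUnit.2 (T.map Empty.elim t)
  have hconst : S.map (fun _ => true) s₁ = S.map (fun _ => false) s₁ := by
    apply hBool
    rw [hnat, hnat, hs₁, T.map_map_s11, T.map_map_s11]
    congr 1
    exact funext fun e => e.elim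
  refine ⟨S.substConst s₀ s₁, hT ?_⟩
  rw [← hnat, S.map_elim_substConst s₀ hconst, hs₁]

theorem monad_trnkova_closure_dichotomy_general (S T : SetMonad)
    (r : ∀ X : Type, S.obj X → T.obj X)
    (hnat : ∀ (X Y : Type) (f : X → Y) (x : S.obj X), r Y (S.map f x) = T.map f (r X x))
    (hpres : PreservesFiniteIntersections T.toSetFunctor)
    (hbij : ∀ X : Type, Nonempty X → Function.Bijective (r X)) :
    (∀ X : Type, Function.Bijective (r X)) ∨ IsEmpty (S.obj Empty) := by
  rcases isEmpty_or_nonempty (S.obj Empty) with hS | ⟨⟨s₀⟩⟩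
  · exact Or.inr hS
  have hEmpty : Function.Bijective (r Empty) :=
    bijective_app_empty hnat hpres (hbij Unit ⟨()⟩) (hbij Bool ⟨true⟩).1 s₀
  refine Or.inl fun X => ?_
  rcases isEmpty_or_nonempty X with hX | hX
  · exact bijective_app_of_equiv hnat (Equiv.equivEmpty X) hEmpty
  · exact hbij X hX

/-- Let `r : S → T` be the monad morphism from a monad `S` on Set into its Trnková
closure `T` (an intersection-preserving monad agreeing with `S`, via `r`, on all
nonempty sets).  Then either `r` is an isomorphism, or `S∅ = ∅` (so that `S` is the
submonad `T⁰` of `T` obtained by redefining the value at `∅` to be `∅`).  In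
particular, if `S∅ ≠ ∅` then `r_∅` is bijective. -/
theorem monad_trnkova_closure_dichotomy (S T : SetMonad)
    (r : ∀ X : Type, S.obj X → T.obj X)
    (hnat : ∀ (X Y : Type) (f : X → Y) (x : S.obj X), r Y (S.map f x) = T.map f (r X x))
    (hunit : ∀ (X : Type) (x : X), r X (S.unit X x) = T.unit X x)
    (hmult : ∀ (X : Type) (p : S.obj (S.obj X)),
      r X (S.mult X p) = T.mult X (T.map (r X) (r (S.obj X) p)))
    (hpres : PreservesFiniteIntersections T.toSetFunctor)
    (hbij : ∀ X : Type, Nonempty X → Function.Bijective (r X)) :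
    (∀ X : Type, Function.Bijective (r X)) ∨ IsEmpty (S.obj Empty) :=
  monad_trnkova_closure_dichotomy_general S T r hnat hpres hbij
end
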